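/- arXiv:2605.12292 — 4 statements merged into one kernel-verified Lean document; each statement's English description precedes it below -/
import Mathlib

section
/- Let k ≥ 2 models have true mean gaps Δ_{ij} ≠ 0 for all pairs i < j, and let two independent benchmarks of size N produce i.i.d. Gaussian gap statistics Y_{ij}, Y'_{ij} ~ N(Δ_{ij}, 2σ²/N), independent across the two benchmarks. Then the expected Kendall-τ correlation τ_{N,N} = (2/(k(k−1))) Σ_{i<j} sgn(Y_{ij}) sgn(Y'_{ij}) satisfies E[τ_{N,N}] = (2/(k(k−1))) Σ_{i<j} erf²(|Δ_{ij}|√N / (2σ)). -/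
/-!
By independence, `E[sgn Y · sgn Y'] = E[sgn Y] · E[sgn Y']`, and for `X ~ N(m, v)` one has
`E[sgn X] = P(X > 0) - P(X < 0) = erf (m / √(2v))`: rescaling `X` to variance `1/2` turns its
density into `e^{-x²}/√π`, the integrand of `erf`. Since `erf` is odd, the square of
`erf (Δ √N / (2σ))` does not see the sign of `Δ`.
-/

open MeasureTheory ProbabilityTheory

/-- The Gauss error function `erf x = (2/√π) ∫₀ˣ e^{-t²} dt`. -/
noncomputable def erf (x : ℝ) : ℝ :=
  (2 / Real.sqrt Real.pi) * ∫ t in (0:ℝ)..x, Real.exp (-t ^ 2)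

open Set Real
open scoped NNReal

lemma Real.sign_eq_indicator_sub_indicator (x : ℝ) :
    sign x = (Ioi 0).indicator 1 x - (Iio 0).indicator 1 x := by
  rcases lt_trichotomy x 0 with h | rfl | h
  · simp [sign_of_neg h, h, h.not_gt]
  · simp
  · simp [sign_of_pos h, h, h.not_gt]

lemma Real.measurable_sign : Measurable sign := by
  rw [funext sign_eq_indicator_sub_indicator]
  exact (measurable_const.indicator measurableSet_Ioi).sub
    (measurable_const.indicator measurableSet_Iio)

lemma Real.abs_sign_le_one (x : ℝ) : |sign x| ≤ 1 := by
  rcases sign_apply_eq x with h | h | h <;> simp [h]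

lemma Real.sign_div_of_pos (x : ℝ) {c : ℝ} (hc : 0 < c) : sign (x / c) = sign x := by
  rcases lt_trichotomy x 0 with h | rfl | h
  · rw [sign_of_neg h, sign_of_neg (div_neg_of_neg_of_pos h hc)]
  · simp
  · rw [sign_of_pos h, sign_of_pos (div_pos h hc)]

lemma integral_sign_eq_measureReal_Ioi_sub_Iio (ν : Measure ℝ) [IsFiniteMeasure ν] :
    ∫ x, sign x ∂ν = ν.real (Ioi 0) - ν.real (Iio 0) := by
  simp_rw [sign_eq_indicator_sub_indicator]
  rw [integral_sub ((integrable_const 1).indicator measurableSet_Ioi)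
      ((integrable_const 1).indicator measurableSet_Iio),
    integral_indicator_one measurableSet_Ioi, integral_indicator_one measurableSet_Iio]

lemma integrable_sign_comp_mul_sign_comp {Ω : Type*} [MeasurableSpace Ω] {μ : Measure Ω}
    [IsFiniteMeasure μ] {X Y : Ω → ℝ} (hX : AEMeasurable X μ) (hY : AEMeasurable Y μ) :
    Integrable (fun ω ↦ sign (X ω) * sign (Y ω)) μ := by
  refine Integrable.of_bound (C := 1)
    ((measurable_sign.comp_aemeasurable hX).mul
      (measurable_sign.comp_aemeasurable hY)).aestronglyMeasurable (ae_of_all _ fun ω ↦ ?_)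
  rw [norm_mul, Real.norm_eq_abs, Real.norm_eq_abs]
  exact mul_le_one₀ (abs_sign_le_one _) (abs_nonneg _) (abs_sign_le_one _)

lemma erf_neg (x : ℝ) : erf (-x) = -erf x := by
  rw [erf, erf, ← mul_neg, ← intervalIntegral.integral_symm]
  congr 1
  have h := intervalIntegral.integral_comp_neg (a := 0) (b := -x) (fun t ↦ exp (-t ^ 2))
  simp only [neg_sq, neg_neg, neg_zero] at h
  exact h

lemma erf_abs_sq (x : ℝ) : erf |x| ^ 2 = erf x ^ 2 := by
  rcases abs_choice x with h | h <;> simp [h, erf_neg]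

lemma integral_Iic_zero_exp_neg_sq : ∫ t in Iic 0, exp (-t ^ 2) = √π / 2 := by
  have h := integral_comp_neg_Iic 0 fun t ↦ exp (-t ^ 2)
  simp only [neg_sq, neg_zero] at h
  simpa [h] using integral_gaussian_Ioi 1

lemma gaussianPDFReal_zero_two_inv (x : ℝ) : gaussianPDFReal 0 2⁻¹ x = exp (-x ^ 2) / √π := by
  simp [gaussianPDFReal, div_eq_inv_mul, mul_comm]

lemma gaussianReal_zero_two_inv_real_Iic (b : ℝ) :
    (gaussianReal 0 2⁻¹).real (Iic b) = (1 + erf b) / 2 := by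
  have hint : Integrable fun t : ℝ ↦ exp (-t ^ 2) := by
    simpa using integrable_exp_neg_mul_sq one_pos
  have hsplit := intervalIntegral.integral_Iic_sub_Iic (a := 0) (b := b) hint.integrableOn
    hint.integrableOn
  rw [measureReal_def, gaussianReal_apply_eq_integral _ (by norm_num),
    ENNReal.toReal_ofReal (setIntegral_nonneg measurableSet_Iic fun x _ ↦
      gaussianPDFReal_nonneg _ _ x)]
  simp_rw [gaussianPDFReal_zero_two_inv, integral_div]
  rw [erf, ← hsplit, integral_Iic_zero_exp_neg_sq]
  have : 0 < √π := sqrt_pos.2 pi_pos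
  field_simp
  ring

lemma integral_sign_gaussianReal_two_inv (m : ℝ) :
    ∫ x, sign x ∂gaussianReal m 2⁻¹ = erf m := by
  have := nullSingletonClass_gaussianReal (μ := m) (v := 2⁻¹) (by norm_num)
  have hIic : (gaussianReal m 2⁻¹).real (Iic 0) = (1 + erf (-m)) / 2 := by
    rw [← zero_add m, ← gaussianReal_map_add_const, map_measureReal_apply (by fun_prop)
      measurableSet_Iic, preimage_add_const_Iic, zero_add, zero_sub,
      gaussianReal_zero_two_inv_real_Iic]
  rw [integral_sign_eq_measureReal_Ioi_sub_Iio, measureReal_congr Iio_ae_eq_Iic, ← compl_Iic,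
    probReal_compl_eq_one_sub measurableSet_Iic, hIic, erf_neg]
  ring

lemma integral_sign_gaussianReal (m : ℝ) {v : ℝ≥0} (hv : v ≠ 0) :
    ∫ x, sign x ∂gaussianReal m v = erf (m / √(2 * v)) := by
  set c := √(2 * v)
  have hc : 0 < c := sqrt_pos.2 (by positivity)
  have hvar : v / .mk (c ^ 2) (sq_nonneg c) = 2⁻¹ := by
    ext
    rw [NNReal.coe_div, NNReal.coe_mk, sq_sqrt (by positivity)]
    field_simp
    norm_num
  calc ∫ x, sign x ∂gaussianReal m v = ∫ x, sign (x / c) ∂gaussianReal m v := by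
        simp_rw [sign_div_of_pos _ hc]
    _ = erf (m / c) := by
        rw [← integral_map (by fun_prop) measurable_sign.aestronglyMeasurable,
          gaussianReal_map_div_const, hvar, integral_sign_gaussianReal_two_inv]

section RandomVariables

variable {Ω : Type*} [MeasurableSpace Ω] {μ : Measure Ω}

lemma aemeasurable_of_map_eq_gaussianReal {X : Ω → ℝ} {m : ℝ} {v : ℝ≥0}
    (hX : μ.map X = gaussianReal m v) : AEMeasurable X μ :=
  .of_map_ne_zero (hX ▸ IsProbabilityMeasure.ne_zero _)

lemma integral_sign_of_map_eq_gaussianReal {X : Ω → ℝ} {m : ℝ} {v : ℝ≥0}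
    (hX : μ.map X = gaussianReal m v) (hv : v ≠ 0) :
    ∫ ω, sign (X ω) ∂μ = erf (m / √(2 * v)) := by
  rw [← integral_sign_gaussianReal m hv, ← hX,
    integral_map (aemeasurable_of_map_eq_gaussianReal hX) measurable_sign.aestronglyMeasurable]

lemma integral_sign_mul_sign_of_indepFun {X X' : Ω → ℝ} {m m' : ℝ} {v v' : ℝ≥0}
    (hXX' : IndepFun X X' μ) (hX : μ.map X = gaussianReal m v)
    (hX' : μ.map X' = gaussianReal m' v') (hv : v ≠ 0) (hv' : v' ≠ 0) :
    ∫ ω, sign (X ω) * sign (X' ω) ∂μ = erf (m / √(2 * v)) * erf (m' / √(2 * v')) := by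
  rw [hXX'.integral_fun_comp_mul_comp (aemeasurable_of_map_eq_gaussianReal hX)
      (aemeasurable_of_map_eq_gaussianReal hX') measurable_sign.aestronglyMeasurable
      measurable_sign.aestronglyMeasurable,
    integral_sign_of_map_eq_gaussianReal hX hv, integral_sign_of_map_eq_gaussianReal hX' hv']

end RandomVariables

theorem expected_kendall_tau_two_benchmarks_general
    {Ω : Type*} [MeasurableSpace Ω] (μ : Measure Ω) [IsProbabilityMeasure μ]
    (k : ℕ) (N : ℕ) (hN : 1 ≤ N) (σ : ℝ) (hσ : 0 < σ)
    (Δ : Fin k → Fin k → ℝ)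
    (Y Y' : Fin k → Fin k → Ω → ℝ)
    (hY : ∀ i j : Fin k, i < j →
      Measure.map (Y i j) μ = gaussianReal (Δ i j) (Real.toNNReal (2 * σ ^ 2 / N)))
    (hY' : ∀ i j : Fin k, i < j →
      Measure.map (Y' i j) μ = gaussianReal (Δ i j) (Real.toNNReal (2 * σ ^ 2 / N)))
    (hindep : ∀ i j : Fin k, i < j → IndepFun (Y i j) (Y' i j) μ) :
    ∫ ω, (2 / ((k : ℝ) * ((k : ℝ) - 1))) *
        ∑ p ∈ Finset.univ.filter (fun p : Fin k × Fin k => p.1 < p.2),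
          Real.sign (Y p.1 p.2 ω) * Real.sign (Y' p.1 p.2 ω) ∂μ =
      (2 / ((k : ℝ) * ((k : ℝ) - 1))) *
        ∑ p ∈ Finset.univ.filter (fun p : Fin k × Fin k => p.1 < p.2),
          (erf (|Δ p.1 p.2| * Real.sqrt N / (2 * σ))) ^ 2 := by
  have hN₀ : (0 : ℝ) < N := by exact_mod_cast hN
  have hv : (2 * σ ^ 2 / N).toNNReal ≠ 0 := by positivity
  have hscale : √(2 * (2 * σ ^ 2 / N).toNNReal) = 2 * σ / √N := by
    rw [Real.coe_toNNReal _ (by positivity), sqrt_eq_iff_eq_sq (by positivity) (by positivity),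
      div_pow, sq_sqrt hN₀.le]
    ring
  rw [integral_const_mul, integral_finsetSum _ fun p hp ↦ integrable_sign_comp_mul_sign_comp
    (aemeasurable_of_map_eq_gaussianReal (hY _ _ (Finset.mem_filter.1 hp).2))
    (aemeasurable_of_map_eq_gaussianReal (hY' _ _ (Finset.mem_filter.1 hp).2))]
  congr 1
  refine Finset.sum_congr rfl fun p hp ↦ ?_
  have hlt := (Finset.mem_filter.1 hp).2
  rw [integral_sign_mul_sign_of_indepFun (hindep _ _ hlt) (hY _ _ hlt) (hY' _ _ hlt) hv hv,
    hscale, ← sq, ← erf_abs_sq, abs_div, abs_of_pos (by positivity : 0 < 2 * σ / √N),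
    div_div_eq_mul_div]

/-- Expected Kendall-τ between two independent benchmarks of size `N`:
`E[τ_{N,N}] = (2/(k(k−1))) Σ_{i<j} erf²(|Δ_{ij}|√N/(2σ))`. -/
theorem expected_kendall_tau_two_benchmarks
    {Ω : Type*} [MeasurableSpace Ω] (μ : Measure Ω) [IsProbabilityMeasure μ]
    (k : ℕ) (hk : 2 ≤ k) (N : ℕ) (hN : 1 ≤ N) (σ : ℝ) (hσ : 0 < σ)
    (Δ : Fin k → Fin k → ℝ) (hΔ : ∀ i j : Fin k, i < j → Δ i j ≠ 0)
    (Y Y' : Fin k → Fin k → Ω → ℝ)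
    (hYmeas : ∀ i j : Fin k, Measurable (Y i j))
    (hY'meas : ∀ i j : Fin k, Measurable (Y' i j))
    (hY : ∀ i j : Fin k, i < j →
      Measure.map (Y i j) μ = gaussianReal (Δ i j) (Real.toNNReal (2 * σ ^ 2 / N)))
    (hY' : ∀ i j : Fin k, i < j →
      Measure.map (Y' i j) μ = gaussianReal (Δ i j) (Real.toNNReal (2 * σ ^ 2 / N)))
    (hindep : ∀ i j : Fin k, i < j → IndepFun (Y i j) (Y' i j) μ) :
    ∫ ω, (2 / ((k : ℝ) * ((k : ℝ) - 1))) *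
        ∑ p ∈ Finset.univ.filter (fun p : Fin k × Fin k => p.1 < p.2),
          Real.sign (Y p.1 p.2 ω) * Real.sign (Y' p.1 p.2 ω) ∂μ =
      (2 / ((k : ℝ) * ((k : ℝ) - 1))) *
        ∑ p ∈ Finset.univ.filter (fun p : Fin k × Fin k => p.1 < p.2),
          (erf (|Δ p.1 p.2| * Real.sqrt N / (2 * σ))) ^ 2 :=
  expected_kendall_tau_two_benchmarks_general μ k N hN σ hσ Δ Y Y' hY hY' hindep
end

section
/- Fix k ≥ 2, σ > 0, and pairwise gaps Δ_{ij} ≠ 0 with minimum Δ_min = min_{i<j} |Δ_{ij}|, attained by exactly M_min pairs. Define D(N) = 1 − (2/(k(k−1))) Σ_{i<j} erf²(|Δ_{ij}|√N/(2σ)). Then as N → ∞, D(N) ~ C N^{-1/2} exp(−Δ_min² N/(4σ²)) with C = 8σ M_min / (k(k−1) Δ_min √π). -/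
open Filter

open Real Topology Finset

/-! By l'Hôpital's rule `1 - erf x ~ exp (-x²) / (√π x)`, hence `1 - erf² x ~ 2 exp (-x²) / (√π x)`.
With `c = 2 / (k (k - 1)) = 1 / #P` the disagreement is `c Σ_p (1 - erf² (a_p √N))`, where
`a_p = |Δ_p| / (2σ) ≥ m = Δmin / (2σ)`. Relative to `exp (-m² N) / √N`, a pair with `a_p > m`
contributes a factor `exp (-(a_p² - m²) N) → 0`, and each of the `Mmin` pairs with `a_p = m` the
same constant `2 c / (√π m)`. -/

lemma hasDerivAt_erf (x : ℝ) : HasDerivAt erf (2 / √π * exp (-x ^ 2)) x :=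
  ((by fun_prop : Continuous fun t : ℝ => exp (-t ^ 2)).integral_hasStrictDerivAt
    0 x).hasDerivAt.const_mul _

lemma tendsto_erf_atTop : Tendsto erf atTop (𝓝 1) := by
  have hgauss : Tendsto (fun x => ∫ t in (0:ℝ)..x, exp (-t ^ 2)) atTop (𝓝 (√π / 2)) := by
    have hIoi : ∫ t in Set.Ioi 0, exp (-t ^ 2) = √π / 2 := by
      simpa using integral_gaussian_Ioi 1
    simpa [hIoi] using MeasureTheory.intervalIntegral_tendsto_integral_Ioi 0
      (integrable_exp_neg_mul_sq one_pos).integrableOn tendsto_id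
  have hπ : √π ≠ 0 := (sqrt_pos.mpr pi_pos).ne'
  unfold erf; simpa [hπ] using hgauss.const_mul (2 / √π)

lemma tendsto_one_sub_erf_mul_mul_exp_sq :
    Tendsto (fun x => (1 - erf x) * (x * exp (x ^ 2))) atTop (𝓝 (1 / √π)) := by
  have hg : ∀ x ≠ 0,
      HasDerivAt (fun x => exp (-x ^ 2) / x) (-(exp (-x ^ 2) * (2 + 1 / x ^ 2))) x := by
    intro x hx
    refine ((hasDerivAt_pow 2 x).fun_neg.exp.fun_div (hasDerivAt_id' x) hx).congr_deriv ?_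
    field_simp
    ring
  have hdiv : Tendsto (fun x => -(2 / √π * exp (-x ^ 2)) / -(exp (-x ^ 2) * (2 + 1 / x ^ 2)))
      atTop (𝓝 (1 / √π)) := by
    have h : Tendsto (fun x : ℝ => 2 / √π / (2 + 1 / x ^ 2)) atTop (𝓝 (2 / √π / (2 + 0))) :=
      tendsto_const_nhds.div (tendsto_const_nhds.add
        (tendsto_const_nhds.div_atTop (tendsto_pow_atTop two_ne_zero))) (by norm_num)
    convert h using 2 with x
    · field_simp
    · ring
  have hlim := HasDerivAt.lhopital_zero_atTop
    (f := fun x => 1 - erf x) (g := fun x => exp (-x ^ 2) / x)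
    (Eventually.of_forall fun x => (hasDerivAt_erf x).const_sub 1)
    ((eventually_ne_atTop 0).mono hg)
    (Eventually.of_forall fun x => by simp [(exp_pos _).ne']; positivity)
    (by simpa using tendsto_erf_atTop.const_sub 1)
    ((tendsto_exp_atBot.comp (tendsto_neg_atTop_atBot.comp
      (tendsto_pow_atTop two_ne_zero))).div_atTop tendsto_id) hdiv
  refine hlim.congr fun x => ?_
  rw [exp_neg]
  field_simp

lemma tendsto_one_sub_erf_sq_mul_mul_exp_sq :
    Tendsto (fun x => (1 - erf x ^ 2) * (x * exp (x ^ 2))) atTop (𝓝 (2 / √π)) := by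
  have h := tendsto_one_sub_erf_mul_mul_exp_sq.mul (tendsto_erf_atTop.const_add 1)
  convert h using 2 with x <;> ring

lemma tendsto_one_sub_erf_sq_mul_mul_exp_sq_of_le {a m : ℝ} (hm : 0 < m) (hma : m ≤ a) :
    Tendsto (fun x => (1 - erf (a * x) ^ 2) * (x * exp (m ^ 2 * x ^ 2))) atTop
      (𝓝 (if a = m then 2 / (√π * m) else 0)) := by
  have ha : 0 < a := hm.trans_le hma
  have hmain := (tendsto_one_sub_erf_sq_mul_mul_exp_sq.comp
    (tendsto_id.const_mul_atTop ha)).const_mul a⁻¹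
  have hgap : Tendsto (fun x : ℝ => exp ((m ^ 2 - a ^ 2) * x ^ 2)) atTop
      (𝓝 (if a = m then 1 else 0)) := by
    split_ifs with h
    · simp [h]
    · have hneg : m ^ 2 - a ^ 2 < 0 := by nlinarith [lt_of_le_of_ne hma (Ne.symm h)]
      exact tendsto_exp_atBot.comp
        ((tendsto_pow_atTop two_ne_zero).const_mul_atTop_of_neg hneg)
  convert hmain.mul hgap using 1
  · ext x
    simp only [Function.comp_apply, id]
    rw [mul_pow, show m ^ 2 * x ^ 2 = a ^ 2 * x ^ 2 + (m ^ 2 - a ^ 2) * x ^ 2 by ring, exp_add]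
    field_simp
  · split_ifs with h
    · subst h; field_simp
    · simp

lemma tendsto_sum_one_sub_erf_sq_mul_mul_exp_sq {ι : Type*} (s : Finset ι) (a : ι → ℝ) {m : ℝ}
    (hm : 0 < m) (ha : ∀ i ∈ s, m ≤ a i) :
    Tendsto (fun x => (∑ i ∈ s, (1 - erf (a i * x) ^ 2)) * (x * exp (m ^ 2 * x ^ 2))) atTop
      (𝓝 (#{i ∈ s | a i = m} * (2 / (√π * m)))) := by
  simp_rw [sum_mul]
  rw [← nsmul_eq_mul, ← sum_const, sum_filter]
  exact tendsto_finsetSum s fun i hi => tendsto_one_sub_erf_sq_mul_mul_exp_sq_of_le hm (ha i hi)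

lemma tendsto_one_sub_mul_sum_erf_sq_div {ι : Type*} (s : Finset ι) (a : ι → ℝ) {m c : ℝ}
    (hm : 0 < m) (ha : ∀ i ∈ s, m ≤ a i) (hc : c * #s = 1) (hM : #{i ∈ s | a i = m} ≠ 0) :
    Tendsto (fun x => (1 - c * ∑ i ∈ s, erf (a i * x) ^ 2) /
      (2 * c * #{i ∈ s | a i = m} / (√π * m) / x * exp (-(m ^ 2 * x ^ 2)))) atTop (𝓝 1) := by
  have hc0 : c ≠ 0 := left_ne_zero_of_mul_eq_one hc
  have hM0 : (#{i ∈ s | a i = m} : ℝ) ≠ 0 := Nat.cast_ne_zero.mpr hM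
  have hlim := (tendsto_sum_one_sub_erf_sq_mul_mul_exp_sq s a hm ha).const_mul
    (√π * m / (2 * #{i ∈ s | a i = m}))
  rw [show √π * m / (2 * #{i ∈ s | a i = m}) * (#{i ∈ s | a i = m} * (2 / (√π * m))) = 1 by
    field_simp] at hlim
  refine hlim.congr' ?_
  filter_upwards [eventually_gt_atTop 0] with x hx
  rw [sum_sub_distrib, sum_const, nsmul_eq_mul, mul_one, exp_neg, ← hc]
  generalize ∑ i ∈ s, erf (a i * x) ^ 2 = S
  field_simp

theorem kendall_tau_disagreement_asymptotic_general
    (k : ℕ) (σ : ℝ) (hσ : 0 < σ)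
    (Δ : Fin k → Fin k → ℝ) (hΔ : ∀ i j : Fin k, i < j → Δ i j ≠ 0)
    (P : Finset (Fin k × Fin k))
    (hP : P = Finset.univ.filter (fun p : Fin k × Fin k => p.1 < p.2))
    (hPne : P.Nonempty)
    (Δmin : ℝ) (hmin : Δmin = P.inf' hPne (fun p => |Δ p.1 p.2|))
    (Mmin : ℕ) (hM : Mmin = (P.filter (fun p => |Δ p.1 p.2| = Δmin)).card) :
    Tendsto (fun N : ℕ =>
        (1 - (2 / ((k : ℝ) * ((k : ℝ) - 1))) *
            ∑ p ∈ P, (erf (|Δ p.1 p.2| * Real.sqrt N / (2 * σ))) ^ 2) /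
          ((8 * σ * (Mmin : ℝ) / ((k : ℝ) * ((k : ℝ) - 1) * Δmin * Real.sqrt Real.pi)) /
              Real.sqrt N * Real.exp (-(Δmin ^ 2 * N) / (4 * σ ^ 2))))
      atTop (nhds 1) := by
  have hσ2 : 0 < 2 * σ := by positivity
  have hΔpos : ∀ p ∈ P, 0 < |Δ p.1 p.2| := fun p hp =>
    abs_pos.mpr (hΔ _ _ (by simpa [hP] using hp))
  have hΔmin : 0 < Δmin := hmin ▸ (lt_inf'_iff hPne).mpr hΔpos
  have hcard : (#P : ℝ) = k * (k - 1) / 2 := by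
    rw [hP, ← univ_product_univ, card_product_filter_lt, card_univ, Fintype.card_fin,
      Nat.cast_choose_two]
  have hk : (k : ℝ) * (k - 1) ≠ 0 := by
    have : (0 : ℝ) < #P := by exact_mod_cast hPne.card_pos
    intro h; rw [h, zero_div] at hcard; linarith
  have hc : 2 / ((k : ℝ) * (k - 1)) * #P = 1 := by
    rw [hcard, div_mul_div_comm, mul_comm, div_self (mul_ne_zero hk two_ne_zero)]
  have hMmin : #{p ∈ P | |Δ p.1 p.2| / (2 * σ) = Δmin / (2 * σ)} = Mmin := by
    simp [div_left_inj' hσ2.ne', hM]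
  have hMpos : Mmin ≠ 0 := by
    obtain ⟨p, hp, hpmin⟩ := exists_mem_eq_inf' hPne fun p => |Δ p.1 p.2|
    exact hM ▸ (card_pos.mpr ⟨p, mem_filter.mpr ⟨hp, hmin ▸ hpmin.symm⟩⟩).ne'
  have hlim := (tendsto_one_sub_mul_sum_erf_sq_div P (fun p => |Δ p.1 p.2| / (2 * σ))
    (div_pos hΔmin hσ2)
    (fun p hp => div_le_div_of_nonneg_right (hmin ▸ inf'_le _ hp) hσ2.le) hc
    (hMmin ▸ hMpos)).comp (tendsto_sqrt_atTop.comp tendsto_natCast_atTop_atTop)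
  convert hlim using 2 with N
  simp only [Function.comp_apply, hMmin, mul_div_right_comm _ (√(N : ℝ)),
    sq_sqrt (Nat.cast_nonneg _)]
  congr 3 <;> field_simp <;> ring

/-- Asymptotic rate of the expected Kendall-τ disagreement between two independent
benchmarks: `D(N) ~ C N^{-1/2} exp(−Δ_min² N/(4σ²))` with
`C = 8σ M_min/(k(k−1)Δ_min√π)`. -/
theorem kendall_tau_disagreement_asymptotic
    (k : ℕ) (hk : 2 ≤ k) (σ : ℝ) (hσ : 0 < σ)
    (Δ : Fin k → Fin k → ℝ) (hΔ : ∀ i j : Fin k, i < j → Δ i j ≠ 0)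
    (P : Finset (Fin k × Fin k))
    (hP : P = Finset.univ.filter (fun p : Fin k × Fin k => p.1 < p.2))
    (hPne : P.Nonempty)
    (Δmin : ℝ) (hmin : Δmin = P.inf' hPne (fun p => |Δ p.1 p.2|))
    (Mmin : ℕ) (hM : Mmin = (P.filter (fun p => |Δ p.1 p.2| = Δmin)).card) :
    Tendsto (fun N : ℕ =>
        (1 - (2 / ((k : ℝ) * ((k : ℝ) - 1))) *
            ∑ p ∈ P, (erf (|Δ p.1 p.2| * Real.sqrt N / (2 * σ))) ^ 2) /
          ((8 * σ * (Mmin : ℝ) / ((k : ℝ) * ((k : ℝ) - 1) * Δmin * Real.sqrt Real.pi)) /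
              Real.sqrt N * Real.exp (-(Δmin ^ 2 * N) / (4 * σ ^ 2))))
      atTop (nhds 1) :=
  kendall_tau_disagreement_asymptotic_general k σ hσ Δ hΔ P hP hPne Δmin hmin Mmin hM
end

section
/- Fix k ≥ 2, σ > 0, and pairwise gaps Δ_{ij} ≠ 0 with Δ_min = min_{i<j}|Δ_{ij}| attained by M_min pairs. Define D∞(N) = 1 − (2/(k(k−1))) Σ_{i<j} erf(|Δ_{ij}|√N/(2σ)). Then as N → ∞, D∞(N) ~ (C/2) N^{-1/2} exp(−Δ_min² N/(4σ²)) with C = 8σ M_min / (k(k−1) Δ_min √π). -/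
/-!
By l'Hôpital's rule, `1 - erf x ~ exp (-x²) / (√π x)` as `x → ∞` (Mills' ratio). As there are
`k (k - 1) / 2` pairs, `D∞(N) = (2 / (k (k - 1))) ∑ (1 - erf (c_ij √N))` with `c_ij = |Δ_ij| / (2σ)`.
Measured against the rate `exp (-c₀² N) / (√π c₀ √N)` of the minimal gap `c₀ = Δ_min / (2σ)`, a
term with `c_ij = c₀` tends to `1`, while any other carries the extra factor
`(c₀ / c_ij) exp (-(c_ij² - c₀²) N) → 0`. Hence the ratio tends to `M_min / M_min = 1`.
-/

open Filter

open Real Topology Finset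

lemma hasDerivAt_exp_neg_sq_div {x : ℝ} (hx : x ≠ 0) :
    HasDerivAt (fun x => exp (-x ^ 2) / x) (-(exp (-x ^ 2) * (2 + (x ^ 2)⁻¹))) x := by
  refine (((hasDerivAt_pow 2 x).fun_neg.exp).fun_div (hasDerivAt_id' x) hx).congr_deriv ?_
  field_simp
  ring

lemma tendsto_exp_neg_sq_div_atTop : Tendsto (fun x => exp (-x ^ 2) / x) atTop (𝓝 0) := by
  have h1 : Tendsto (fun x : ℝ => exp (-x ^ 2)) atTop (𝓝 0) :=
    tendsto_exp_atBot.comp (tendsto_neg_atTop_atBot.comp (tendsto_pow_atTop two_ne_zero))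
  simpa [div_eq_mul_inv] using h1.mul tendsto_inv_atTop_zero

lemma tendsto_one_sub_erf_div :
    Tendsto (fun x => (1 - erf x) / (exp (-x ^ 2) / (√π * x))) atTop (𝓝 1) := by
  have hπ : 0 < √π := sqrt_pos.2 pi_pos
  have hquot : Tendsto (fun x : ℝ => -(2 / √π * exp (-x ^ 2)) / -(exp (-x ^ 2) * (2 + (x ^ 2)⁻¹)))
      atTop (𝓝 (1 / √π)) := by
    have h : Tendsto (fun x : ℝ => 2 / √π / (2 + (x ^ 2)⁻¹)) atTop (𝓝 (2 / √π / (2 + 0))) :=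
      tendsto_const_nhds.div (tendsto_const_nhds.add
        (tendsto_inv_atTop_zero.comp (tendsto_pow_atTop two_ne_zero))) (by norm_num)
    convert h using 2 with x
    · rw [neg_div_neg_eq]
      field_simp
    · ring
  have hl := HasDerivAt.lhopital_zero_atTop (f := fun x => 1 - erf x)
    (g := fun x => exp (-x ^ 2) / x)
    (Eventually.of_forall fun x => (hasDerivAt_erf x).const_sub 1)
    ((eventually_ne_atTop 0).mono fun x hx => hasDerivAt_exp_neg_sq_div hx)
    (Eventually.of_forall fun x => by
      have : 0 < exp (-x ^ 2) * (2 + (x ^ 2)⁻¹) := by positivity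
      exact neg_ne_zero.2 this.ne')
    (by simpa using tendsto_erf_atTop.const_sub 1) tendsto_exp_neg_sq_div_atTop hquot
  convert hl.const_mul √π using 2 with x
  · field_simp
  · field_simp

lemma tendsto_const_mul_exp_sub_sq_mul_sq {c c₀ : ℝ} (hc₀ : 0 < c₀) (hc : c₀ ≤ c) :
    Tendsto (fun x => c₀ / c * exp ((c₀ ^ 2 - c ^ 2) * x ^ 2)) atTop
      (𝓝 (if c = c₀ then 1 else 0)) := by
  split_ifs with h
  · subst h
    simp [hc₀.ne']
  · have hneg : c₀ ^ 2 - c ^ 2 < 0 := by nlinarith [lt_of_le_of_ne hc (Ne.symm h)]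
    have := tendsto_exp_atBot.comp
      ((tendsto_pow_atTop two_ne_zero).const_mul_atTop_of_neg hneg)
    simpa using this.const_mul (c₀ / c)

lemma tendsto_one_sub_erf_mul_div {c c₀ : ℝ} (hc₀ : 0 < c₀) (hc : c₀ ≤ c) :
    Tendsto (fun x => (1 - erf (c * x)) / (exp (-(c₀ * x) ^ 2) / (√π * (c₀ * x)))) atTop
      (𝓝 (if c = c₀ then 1 else 0)) := by
  have hc_pos : 0 < c := hc₀.trans_le hc
  have hmills := tendsto_one_sub_erf_div.comp (tendsto_id.const_mul_atTop hc_pos)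
  have := hmills.mul (tendsto_const_mul_exp_sub_sq_mul_sq hc₀ hc)
  rw [one_mul] at this
  refine this.congr' ?_
  filter_upwards [eventually_gt_atTop 0] with x hx
  have hπ : 0 < √π := sqrt_pos.2 pi_pos
  simp only [Function.comp, id]
  rw [show (c₀ ^ 2 - c ^ 2) * x ^ 2 = -(c * x) ^ 2 - -(c₀ * x) ^ 2 by ring, exp_sub]
  field_simp

lemma tendsto_sum_one_sub_erf_mul_div {ι : Type*} (s : Finset ι) {c : ι → ℝ} {c₀ : ℝ}
    (hc₀ : 0 < c₀) (hc : ∀ i ∈ s, c₀ ≤ c i) :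
    Tendsto (fun x => (∑ i ∈ s, (1 - erf (c i * x))) / (exp (-(c₀ * x) ^ 2) / (√π * (c₀ * x))))
      atTop (𝓝 (#{i ∈ s | c i = c₀} : ℝ)) := by
  simp_rw [Finset.sum_div]
  have := tendsto_finsetSum s fun i hi => tendsto_one_sub_erf_mul_div hc₀ (hc i hi)
  rwa [Finset.sum_boole] at this

lemma one_sub_mul_sum_eq_mul_sum_one_sub {ι R : Type*} [CommRing R] {s : Finset ι} {a : R}
    (f : ι → R) (h : #s * a = 1) : 1 - a * ∑ i ∈ s, f i = a * ∑ i ∈ s, (1 - f i) := by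
  rw [Finset.sum_sub_distrib, Finset.sum_const, nsmul_one]
  linear_combination -h

lemma card_filter_lt_mul_two_div_eq_one {α : Type*} [Fintype α] [LinearOrder α]
    (hα : 2 ≤ Fintype.card α) :
    (#{p : α × α | p.1 < p.2} : ℝ) * (2 / (Fintype.card α * (Fintype.card α - 1))) = 1 := by
  have : (Fintype.card α : ℝ) - 1 ≠ 0 := by
    have : (2 : ℝ) ≤ Fintype.card α := by exact_mod_cast hα
    linarith
  rw [Fintype.card_product_filter_lt, Nat.cast_choose_two]
  field_simp

lemma card_filter_eq_inf'_pos {ι α : Type*} [LinearOrder α] {s : Finset ι} (hs : s.Nonempty)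
    (f : ι → α) : 0 < #{i ∈ s | f i = s.inf' hs f} := by
  obtain ⟨i, hi, hi_min⟩ := s.exists_mem_eq_inf' hs f
  exact card_pos.2 ⟨i, mem_filter.2 ⟨hi, hi_min.symm⟩⟩

/-- Asymptotic rate of the expected Kendall-τ disagreement between a benchmark of
size `N` and the oracle ranking: `D∞(N) ~ (C/2) N^{-1/2} exp(−Δ_min² N/(4σ²))`
with `C = 8σ M_min/(k(k−1)Δ_min√π)`. -/
theorem kendall_tau_oracle_disagreement_asymptotic
    (k : ℕ) (hk : 2 ≤ k) (σ : ℝ) (hσ : 0 < σ)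
    (Δ : Fin k → Fin k → ℝ) (hΔ : ∀ i j : Fin k, i < j → Δ i j ≠ 0)
    (P : Finset (Fin k × Fin k))
    (hP : P = Finset.univ.filter (fun p : Fin k × Fin k => p.1 < p.2))
    (hPne : P.Nonempty)
    (Δmin : ℝ) (hmin : Δmin = P.inf' hPne (fun p => |Δ p.1 p.2|))
    (Mmin : ℕ) (hM : Mmin = (P.filter (fun p => |Δ p.1 p.2| = Δmin)).card) :
    Tendsto (fun N : ℕ =>
        (1 - (2 / ((k : ℝ) * ((k : ℝ) - 1))) *
            ∑ p ∈ P, erf (|Δ p.1 p.2| * Real.sqrt N / (2 * σ))) /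
          ((8 * σ * (Mmin : ℝ) / ((k : ℝ) * ((k : ℝ) - 1) * Δmin * Real.sqrt Real.pi)) / 2 /
              Real.sqrt N * Real.exp (-(Δmin ^ 2 * N) / (4 * σ ^ 2))))
      atTop (nhds 1) := by
  have hΔmin_le : ∀ p ∈ P, Δmin ≤ |Δ p.1 p.2| := hmin ▸ fun p hp => P.inf'_le _ hp
  have hΔmin_pos : 0 < Δmin := hmin ▸ (P.lt_inf'_iff _).2 fun p hp =>
    abs_pos.2 (hΔ _ _ (by simpa [hP] using hp))
  have hMmin_pos : (0 : ℝ) < Mmin := by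
    rw [hM, hmin]
    exact_mod_cast card_filter_eq_inf'_pos hPne _
  have hcard : (#P : ℝ) * (2 / (k * (k - 1))) = 1 := by
    simpa [hP] using card_filter_lt_mul_two_div_eq_one (α := Fin k) (by simpa using hk)
  have hk₁ : (k : ℝ) - 1 ≠ 0 := fun h => by simp [h] at hcard
  have hσ2 : (0 : ℝ) < 2 * σ := by positivity
  have hlim := (tendsto_sum_one_sub_erf_mul_div P (c := fun p => |Δ p.1 p.2| / (2 * σ))
    (div_pos hΔmin_pos hσ2) fun p hp => div_le_div_of_nonneg_right (hΔmin_le p hp) hσ2.le).comp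
    (tendsto_sqrt_atTop.comp tendsto_natCast_atTop_atTop)
  simp only [div_left_inj' hσ2.ne', ← hM] at hlim
  have hratio := hlim.div_const (Mmin : ℝ)
  rw [div_self hMmin_pos.ne'] at hratio
  refine hratio.congr' ?_
  filter_upwards [eventually_gt_atTop 0] with N hN
  have hsqrtN : 0 < √(N : ℝ) := sqrt_pos.2 (Nat.cast_pos.2 hN)
  have hexp : -(Δmin / (2 * σ) * √(N : ℝ)) ^ 2 = -(Δmin ^ 2 * N) / (4 * σ ^ 2) := by
    rw [mul_pow, div_pow, sq_sqrt (Nat.cast_nonneg N)]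
    ring
  have harg (p : Fin k × Fin k) : |Δ p.1 p.2| * √(N : ℝ) / (2 * σ) =
      |Δ p.1 p.2| / (2 * σ) * √(N : ℝ) := by ring
  simp only [Function.comp, hexp, harg, one_sub_mul_sum_eq_mul_sum_one_sub _ hcard]
  generalize ∑ p ∈ P, (1 - erf (|Δ p.1 p.2| / (2 * σ) * √(N : ℝ))) = S
  field_simp
  ring
end

section
/- Under the same setting, for two independent benchmarks B, B' of size N, the probability that they disagree on which model has the largest sample mean is at most 2(k−1)·Φ(−Δ₁√N/(σ√2)). -/
open MeasureTheory ProbabilityTheory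

/-- The standard normal CDF `Φ(x) = P(Z ≤ x)` for `Z ~ N(0,1)`. -/
noncomputable def stdNormalCDF (x : ℝ) : ℝ := (gaussianReal 0 1 (Set.Iic x)).toReal

/-!
If the best model `i*` is the strict winner on both benchmarks, they agree. So disagreement
forces, on one of the two benchmarks, `X̄_{i*} - X̄_j ≤ 0` for some rival `j`. That difference is
`N(μ_{i*} - μ_j, 2σ²/N)` with mean at least `Δ₁`, so each such event has probability at most
`Φ(-Δ₁√N/(σ√2))`, and a union bound over the `k - 1` rivals and the two benchmarks gives the claim.
-/

open scoped NNReal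

lemma stdNormalCDF_mono : Monotone stdNormalCDF :=
  fun _ _ hxy => measureReal_mono (Set.Iic_subset_Iic.2 hxy)

lemma gaussianReal_map_standardize (m : ℝ) {v : ℝ≥0} (hv : v ≠ 0) :
    (gaussianReal m v).map (fun y => (y - m) / √v) = gaussianReal 0 1 := by
  change (gaussianReal m v).map ((· / √v) ∘ (· - m)) = _
  rw [← Measure.map_map (by fun_prop) (by fun_prop), gaussianReal_map_sub_const,
    gaussianReal_map_div_const, sub_self, zero_div]
  congr 1
  ext
  simp [hv]

lemma gaussianReal_real_Iic (m x : ℝ) {v : ℝ≥0} (hv : v ≠ 0) :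
    (gaussianReal m v).real (Set.Iic x) = stdNormalCDF ((x - m) / √v) := by
  have hsqrt : 0 < √(v : ℝ) := Real.sqrt_pos.2 (NNReal.coe_pos.2 (pos_iff_ne_zero.2 hv))
  have hIic : Set.Iic x = (fun y => (y - m) / √v) ⁻¹' Set.Iic ((x - m) / √v) := by
    ext y
    simp [div_le_div_iff_of_pos_right hsqrt]
  rw [hIic, ← map_measureReal_apply (by fun_prop) measurableSet_Iic,
    gaussianReal_map_standardize m hv]
  rfl

section GaussianLaw

variable {Ω : Type*} [MeasurableSpace Ω] {μ : Measure Ω} {D : Ω → ℝ} {m : ℝ} {v : ℝ≥0}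

lemma measureReal_nonpos_of_map_eq_gaussianReal (hv : v ≠ 0)
    (hD : μ.map D = gaussianReal m v) :
    μ.real {ω | D ω ≤ 0} = stdNormalCDF (-m / √v) := by
  have hDmeas : AEMeasurable D μ := .of_map_ne_zero (by simp [hD, NeZero.ne])
  rw [← zero_sub, ← gaussianReal_real_Iic m 0 hv, ← hD,
    map_measureReal_apply_of_aemeasurable hDmeas measurableSet_Iic]
  rfl

lemma measureReal_nonpos_le_of_map_eq_gaussianReal {Δ : ℝ} (hv : v ≠ 0)
    (hD : μ.map D = gaussianReal m v) (hΔ : Δ ≤ m) :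
    μ.real {ω | D ω ≤ 0} ≤ stdNormalCDF (-Δ / √v) := by
  rw [measureReal_nonpos_of_map_eq_gaussianReal hv hD]
  exact stdNormalCDF_mono (by gcongr)

end GaussianLaw

lemma setOf_not_exists_common_strict_max_subset {Ω ι : Type*} (X X' : ι → Ω → ℝ) (i : ι) :
    {ω | ¬ ∃ i, (∀ j, j ≠ i → X j ω < X i ω) ∧ (∀ j, j ≠ i → X' j ω < X' i ω)} ⊆
      {ω | ¬ ∀ j, j ≠ i → X j ω < X i ω} ∪ {ω | ¬ ∀ j, j ≠ i → X' j ω < X' i ω} := by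
  intro ω hω
  by_contra h
  simp only [Set.mem_union, Set.mem_ofPred_eq, not_or, not_not] at h
  exact hω ⟨i, h⟩

lemma measureReal_not_strict_max_le {Ω ι : Type*} [MeasurableSpace Ω] [Fintype ι]
    [DecidableEq ι] (μ : Measure Ω) [IsFiniteMeasure μ]
    (X : ι → Ω → ℝ) (i : ι) {p : ℝ} (hp : ∀ j, j ≠ i → μ.real {ω | X i ω - X j ω ≤ 0} ≤ p) :
    μ.real {ω | ¬ ∀ j, j ≠ i → X j ω < X i ω} ≤ ((Fintype.card ι : ℝ) - 1) * p := by
  have hset : {ω | ¬ ∀ j, j ≠ i → X j ω < X i ω} =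
      ⋃ j ∈ Finset.univ.erase i, {ω | X i ω - X j ω ≤ 0} := by
    ext ω
    simp
  have hcard : ((Finset.univ.erase i).card : ℝ) = (Fintype.card ι : ℝ) - 1 := by
    rw [Finset.card_erase_of_mem (Finset.mem_univ i), Finset.card_univ,
      Nat.cast_pred (Fintype.card_pos_iff.2 ⟨i⟩)]
  calc μ.real {ω | ¬ ∀ j, j ≠ i → X j ω < X i ω}
      ≤ ∑ j ∈ Finset.univ.erase i, μ.real {ω | X i ω - X j ω ≤ 0} :=
        hset ▸ measureReal_biUnion_finset_le _ _
    _ ≤ (Finset.univ.erase i).card • p :=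
        Finset.sum_le_card_nsmul _ _ _ fun j hj => hp j (Finset.ne_of_mem_erase hj)
    _ = ((Fintype.card ι : ℝ) - 1) * p := by rw [nsmul_eq_mul, hcard]

theorem position_one_disagreement_prob_general
    {Ω : Type*} [MeasurableSpace Ω] (μ : Measure Ω) [IsProbabilityMeasure μ]
    (k N : ℕ) (hN : 1 ≤ N) (σ : ℝ) (hσ : 0 < σ)
    (μs : Fin k → ℝ) (istar : Fin k)
    (hne : (Finset.univ.erase istar).Nonempty)
    (Δ1 : ℝ) (hΔ1 : Δ1 = μs istar - (Finset.univ.erase istar).sup' hne μs)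
    (Xbar Xbar' : Fin k → Ω → ℝ)
    (hlaw : ∀ j, j ≠ istar →
      Measure.map (fun ω => Xbar istar ω - Xbar j ω) μ =
        gaussianReal (μs istar - μs j) (Real.toNNReal (2 * σ ^ 2 / N)))
    (hlaw' : ∀ j, j ≠ istar →
      Measure.map (fun ω => Xbar' istar ω - Xbar' j ω) μ =
        gaussianReal (μs istar - μs j) (Real.toNNReal (2 * σ ^ 2 / N))) :
    (μ {ω | ¬ ∃ i, (∀ j, j ≠ i → Xbar j ω < Xbar i ω) ∧
        (∀ j, j ≠ i → Xbar' j ω < Xbar' i ω)}).toReal ≤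
      2 * ((k : ℝ) - 1) * stdNormalCDF (-(Δ1 * Real.sqrt N) / (σ * Real.sqrt 2)) := by
  set v := Real.toNNReal (2 * σ ^ 2 / N)
  have hNpos : (0 : ℝ) < N := by exact_mod_cast hN
  have hv : (v : ℝ) = 2 * σ ^ 2 / N := Real.coe_toNNReal _ (by positivity)
  have hv0 : v ≠ 0 := by rw [← NNReal.coe_ne_zero, hv]; positivity
  have harg : -Δ1 / √(v : ℝ) = -(Δ1 * √N) / (σ * √2) := by
    rw [hv, Real.sqrt_div' _ hNpos.le, Real.sqrt_mul' _ (sq_nonneg σ), Real.sqrt_sq hσ.le,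
      div_div_eq_mul_div, neg_mul, mul_comm σ]
  have hbenchmark : ∀ X : Fin k → Ω → ℝ, (∀ j, j ≠ istar →
      μ.map (fun ω => X istar ω - X j ω) = gaussianReal (μs istar - μs j) v) →
      μ.real {ω | ¬ ∀ j, j ≠ istar → X j ω < X istar ω} ≤
        ((k : ℝ) - 1) * stdNormalCDF (-(Δ1 * √N) / (σ * √2)) := by
    intro X hX
    refine (measureReal_not_strict_max_le μ X istar fun j hj => ?_).trans_eq
      (by rw [Fintype.card_fin])
    rw [← harg]
    refine measureReal_nonpos_le_of_map_eq_gaussianReal hv0 (hX j hj) ?_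
    exact hΔ1 ▸ sub_le_sub_left (Finset.le_sup' μs (Finset.mem_erase.2 ⟨hj, Finset.mem_univ j⟩)) _
  calc μ.real _
      ≤ μ.real {ω | ¬ ∀ j, j ≠ istar → Xbar j ω < Xbar istar ω} +
          μ.real {ω | ¬ ∀ j, j ≠ istar → Xbar' j ω < Xbar' istar ω} :=
        (measureReal_mono (setOf_not_exists_common_strict_max_subset Xbar Xbar' istar)).trans
          (measureReal_union_le _ _)
    _ ≤ ((k : ℝ) - 1) * stdNormalCDF (-(Δ1 * √N) / (σ * √2)) +
          ((k : ℝ) - 1) * stdNormalCDF (-(Δ1 * √N) / (σ * √2)) :=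
        add_le_add (hbenchmark Xbar hlaw) (hbenchmark Xbar' hlaw')
    _ = _ := by ring

/-- Position-1 disagreement between two independent benchmarks of size `N`: the
probability that they disagree on which model has the largest sample mean (i.e. no
model is the strict winner on both) is at most `2(k−1)·Φ(−Δ₁√N/(σ√2))`. -/
theorem position_one_disagreement_prob
    {Ω : Type*} [MeasurableSpace Ω] (μ : Measure Ω) [IsProbabilityMeasure μ]
    (k N : ℕ) (hk : 2 ≤ k) (hN : 1 ≤ N) (σ : ℝ) (hσ : 0 < σ)
    (μs : Fin k → ℝ) (istar : Fin k)
    (hmax : ∀ j, j ≠ istar → μs j < μs istar)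
    (hne : (Finset.univ.erase istar).Nonempty)
    (Δ1 : ℝ) (hΔ1 : Δ1 = μs istar - (Finset.univ.erase istar).sup' hne μs)
    (hΔ1pos : 0 < Δ1)
    (Xbar Xbar' : Fin k → Ω → ℝ)
    (hXmeas : ∀ i, Measurable (Xbar i)) (hX'meas : ∀ i, Measurable (Xbar' i))
    (hlaw : ∀ j, j ≠ istar →
      Measure.map (fun ω => Xbar istar ω - Xbar j ω) μ =
        gaussianReal (μs istar - μs j) (Real.toNNReal (2 * σ ^ 2 / N)))
    (hlaw' : ∀ j, j ≠ istar →
      Measure.map (fun ω => Xbar' istar ω - Xbar' j ω) μ =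
        gaussianReal (μs istar - μs j) (Real.toNNReal (2 * σ ^ 2 / N)))
    (hindep : IndepFun (fun ω i => Xbar i ω) (fun ω i => Xbar' i ω) μ) :
    (μ {ω | ¬ ∃ i, (∀ j, j ≠ i → Xbar j ω < Xbar i ω) ∧
        (∀ j, j ≠ i → Xbar' j ω < Xbar' i ω)}).toReal ≤
      2 * ((k : ℝ) - 1) * stdNormalCDF (-(Δ1 * Real.sqrt N) / (σ * Real.sqrt 2)) :=
  position_one_disagreement_prob_general μ k N hN σ hσ μs istar hne Δ1 hΔ1 Xbar Xbar' hlaw hlaw'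
end
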